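/- arXiv:2202.02100 — 2 statements merged into one kernel-verified Lean document; each statement's English description precedes it below -/
import Mathlib

section
/- Let f ∈ ℤ[x] be a monic polynomial such that f(p) ∣ f(p^p) for every prime p (i.e., for all primes p ≥ 2). If f is not a power of x (that is, f(x) ≠ x^m for every nonnegative integer m), then the polynomial x − 1 divides f(x) in ℤ[x]. -/
/-!
Write `f = X ^ k * g` with `g(0) ≠ 0` and suppose `f(1) ≠ 0`; we show `g = 1`. Reducing
`f(p) ∣ f(p ^ p)` modulo a prime `q` shows: if a prime `p ≢ 0` is a root of `g` mod `q`, so is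
`p ^ p`. With Dirichlet's theorem, a root `x ≢ 0` of order `d` then forces every `x ^ r` with
`r` prime to `d` to be a root, so `φ(d) ≤ deg g` and `d ∣ L = (2 deg g)!`.

Split `g = ∏ Φ_e * g₁` with `e ∣ L` and no `Φ_e` (`e ∣ L`) dividing `g₁`. If `g₁` is not
constant, Schur's theorem gives roots `n ≢ 0` of `g₁` modulo arbitrarily large primes `q`; then
`n ^ L ≡ 1`, contradicting a Bezout relation `a g₁ + b (X ^ L - 1) = N` in `ℤ[X]` once `q > |N|`.
If `g = ∏ Φ_e` with all `e ≥ 2`, take `e` whose factorization is lexicographically least, `ℓ` its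
largest prime factor and `q` a prime factor of `Φ_e(ℓ)`. Then `ℓ` has order `e` mod `q`, `q > ℓ`,
and a factor `Φ_e'` vanishing at `ℓ ^ ℓ` mod `q` has `e' = q ^ t * (e / ℓ)`, which is
lexicographically smaller.
-/

open Polynomial

theorem Nat.dvd_factorial_of_totient_le {d D : ℕ} (hd : d ≠ 0) (h : d.totient ≤ D) :
    d ∣ (2 * D).factorial := by
  refine (Nat.dvd_iff_prime_pow_dvd_dvd _ d).mpr fun p k hp hpk => ?_
  rcases k.eq_zero_or_pos with rfl | hk
  · exact (pow_zero p).symm ▸ one_dvd _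
  have htot : p ^ k ≤ 2 * (p ^ k).totient := by
    obtain ⟨j, rfl⟩ := Nat.exists_eq_add_of_lt hk
    rw [Nat.totient_prime_pow_succ hp, zero_add, pow_succ]
    have : p ≤ 2 * (p - 1) := by have := hp.two_le; omega
    nlinarith [Nat.zero_le (p ^ j)]
  refine Nat.dvd_factorial (pow_pos hp.pos k) (htot.trans ?_)
  have := Nat.le_of_dvd (Nat.totient_pos.mpr (Nat.pos_of_ne_zero hd)) (Nat.totient_dvd_of_dvd hpk)
  omega

theorem Nat.toLex_factorization_lt {e ℓ q : ℕ} (he : e ≠ 0) (hℓ : ℓ.Prime) (hℓe : ℓ ∣ e)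
    (hq : q.Prime) (hℓq : ℓ < q) (t : ℕ) :
    toLex (q ^ t * (e / ℓ)).factorization < toLex e.factorization := by
  obtain ⟨m, rfl⟩ := hℓe
  have hm : m ≠ 0 := right_ne_zero_of_mul he
  rw [Nat.mul_div_cancel_left m hℓ.pos, Nat.factorization_mul (pow_ne_zero t hq.ne_zero) hm,
    Nat.factorization_mul hℓ.ne_zero hm, hq.factorization_pow, hℓ.factorization]
  refine ⟨ℓ, fun j hj => ?_, ?_⟩
  · simp [hj.ne', (hj.trans hℓq).ne']
  · simp [hℓq.ne']

theorem Polynomial.exists_prime_gt_dvd_eval {g : ℤ[X]} (hg : 0 < g.natDegree) (h0 : g.eval 0 ≠ 0)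
    (B : ℕ) : ∃ (q : ℕ) (n : ℤ), q.Prime ∧ B < q ∧ (q : ℤ) ∣ g.eval n ∧ ¬ (q : ℤ) ∣ n := by
  set a := g.eval 0
  set c : ℤ := a * B.factorial
  have hc : c ≠ 0 := mul_ne_zero h0 (by positivity)
  set P := g.comp (C (a * c) * X)
  have hP : P ^ 2 - C (a ^ 2) ≠ 0 := by
    intro h
    have hdeg := congrArg natDegree (sub_eq_zero.mp h)
    rw [natDegree_pow, natDegree_C, natDegree_comp, natDegree_C_mul_X _ (mul_ne_zero h0 hc)] at hdeg
    omega
  obtain ⟨t, ht⟩ := Infinite.exists_notMem_finset (P ^ 2 - C (a ^ 2)).roots.toFinset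
  rw [Multiset.mem_toFinset, mem_roots hP] at ht
  have hPt : g.eval (a * (c * t)) ^ 2 ≠ a ^ 2 := by
    simpa [P, sub_eq_zero, mul_assoc] using ht
  -- With `w = a B! t` and `n = a w`, `g(n) = a (1 + w s)`; a prime factor of `1 + w s` is prime
  -- to `w`, hence exceeds `B` and does not divide `n`.
  set w := c * t
  obtain ⟨s, hs⟩ : a * w ∣ g.eval (a * w) - a := by simpa using g.sub_dvd_eval_sub (a * w) 0
  set z := 1 + w * s
  have hgz : g.eval (a * w) = a * z := by linear_combination hs
  have hz : z.natAbs ≠ 1 := by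
    intro h
    rcases Int.natAbs_eq_iff.mp h with h | h <;> exact hPt (by rw [hgz, h]; ring)
  obtain ⟨q, hq, hqz⟩ := Nat.exists_prime_and_dvd hz
  replace hqz : (q : ℤ) ∣ z := Int.natCast_dvd.mpr hqz
  have hqw : ¬ (q : ℤ) ∣ w := fun h => hq.ne_one <| Nat.dvd_one.mp <|
    Int.natCast_dvd.mp ((Int.dvd_add_left (h.mul_right s)).mp hqz)
  refine ⟨q, a * w, hq, ?_, hgz ▸ hqz.mul_left a, ?_⟩
  · by_contra! hqB
    exact hqw (((Int.natCast_dvd_natCast.mpr (Nat.dvd_factorial hq.pos hqB)).mul_left a).mul_right t)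
  · have hqa : ¬ (q : ℤ) ∣ a := fun h => hqw ((h.mul_right _).mul_right _)
    exact (Nat.prime_iff_prime_int.mp hq).not_dvd_mul hqa hqw

theorem Polynomial.exists_mul_add_mul_eq_C_of_isCoprime_map {f g : ℤ[X]} (hg : g.natDegree ≠ 0)
    (h : IsCoprime (f.map (Int.castRingHom ℚ)) (g.map (Int.castRingHom ℚ))) :
    ∃ (N : ℤ) (a b : ℤ[X]), N ≠ 0 ∧ f * a + g * b = C N := by
  obtain ⟨a, b, -, -, hab⟩ := exists_mul_add_mul_eq_C_resultant f g le_rfl le_rfl (Or.inr hg)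
  refine ⟨_, a, b, fun h0 => resultant_ne_zero _ _ h ?_, hab⟩
  rw [natDegree_map_eq_of_injective (RingHom.injective_int _),
    natDegree_map_eq_of_injective (RingHom.injective_int _), resultant_map_map, h0, map_zero]

theorem Polynomial.isCoprime_map_X_pow_sub_one {g : ℤ[X]} {L : ℕ} (hL : L ≠ 0)
    (h : ∀ e ∈ L.divisors, ¬ cyclotomic e ℤ ∣ g) :
    IsCoprime (g.map (Int.castRingHom ℚ)) (X ^ L - 1) := by
  rw [← prod_cyclotomic_eq_X_pow_sub_one (Nat.pos_of_ne_zero hL)]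
  refine IsCoprime.prod_right fun e he => ?_
  have he0 : 0 < e := Nat.pos_of_mem_divisors he
  refine ((cyclotomic.irreducible_rat he0).coprime_iff_not_dvd.mpr ?_).symm
  rw [← map_cyclotomic_int, Polynomial.map_dvd_map _ (RingHom.injective_int _) (cyclotomic.monic e ℤ)]
  exact h e he

theorem Polynomial.exists_prod_cyclotomic_mul {s : Finset ℕ} (hs : 0 ∉ s) :
    ∀ {g : ℤ[X]}, g.Monic → ∃ (S : Multiset ℕ) (g₁ : ℤ[X]), g₁.Monic ∧ (∀ e ∈ S, e ∈ s) ∧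
      g = (S.map fun e => cyclotomic e ℤ).prod * g₁ ∧ ∀ e ∈ s, ¬ cyclotomic e ℤ ∣ g₁ := by
  intro g hg
  induction hn : g.natDegree using Nat.strong_induction_on generalizing g with
  | _ n ih =>
    by_cases hex : ∃ e ∈ s, cyclotomic e ℤ ∣ g
    · obtain ⟨e, hes, g₂, rfl⟩ := hex
      have hg₂ : g₂.Monic := (cyclotomic.monic e ℤ).of_mul_monic_left hg
      have hdeg : g₂.natDegree < n := by
        have he : 0 < e := Nat.pos_of_ne_zero fun h => hs (h ▸ hes)
        rw [← hn, (cyclotomic.monic e ℤ).natDegree_mul hg₂, natDegree_cyclotomic]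
        have := Nat.totient_pos.mpr he
        omega
      obtain ⟨S, g₁, hg₁, hSs, rfl, hnd⟩ := ih _ hdeg hg₂ rfl
      refine ⟨e ::ₘ S, g₁, hg₁, ?_, by rw [Multiset.map_cons, Multiset.prod_cons, mul_assoc], hnd⟩
      exact Multiset.forall_mem_cons.mpr ⟨hes, hSs⟩
    · exact ⟨0, g, hg, by simp, by simp, fun e he hdvd => hex ⟨e, he, hdvd⟩⟩

theorem Polynomial.isRoot_map_prod_cyclotomic_iff {R : Type*} [CommRing R] [IsDomain R]
    (φ : ℤ →+* R) {S : Multiset ℕ} {x : R} :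
    ((S.map fun e => cyclotomic e ℤ).prod.map φ).IsRoot x ↔ ∃ e ∈ S, (cyclotomic e R).IsRoot x := by
  simp [Polynomial.map_multiset_prod, eval_multiset_prod, Multiset.prod_eq_zero_iff]

def Polynomial.PrimeSelfPowClosed {R : Type*} [Semiring R] (P : R[X]) : Prop :=
  ∀ p : ℕ, p.Prime → (p : R) ≠ 0 → P.IsRoot (p : R) → P.IsRoot ((p : R) ^ p)

theorem Polynomial.primeSelfPowClosed_map {R : Type*} [CommRing R] [IsDomain R] {f g : ℤ[X]}
    {k : ℕ} (hfg : f = X ^ k * g) (hdvd : ∀ p : ℕ, p.Prime → f.eval (p : ℤ) ∣ f.eval ((p : ℤ) ^ p))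
    (φ : ℤ →+* R) : (g.map φ).PrimeSelfPowClosed := by
  intro p hp hp0 hroot
  have h := _root_.map_dvd φ (hdvd p hp)
  rw [← eval_map_apply, ← eval_map_apply, map_pow, map_natCast, hfg, Polynomial.map_mul,
    eval_mul, eval_mul, hroot.eq_zero, mul_zero, zero_dvd_iff, mul_eq_zero] at h
  exact h.resolve_left (by simp [hp0])

section ZMod

variable {q : ℕ} [hq : Fact q.Prime] {P : (ZMod q)[X]}

theorem ZMod.orderOf_pos_of_ne_zero {x : ZMod q} (hx : x ≠ 0) : 0 < orderOf x :=
  Nat.pos_of_dvd_of_pos (ZMod.orderOf_dvd_card_sub_one hx) (Nat.sub_pos_of_lt hq.out.one_lt)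

theorem ZMod.orderOf_lt_of_ne_zero {x : ZMod q} (hx : x ≠ 0) : orderOf x < q := by
  have := Nat.le_of_dvd (Nat.sub_pos_of_lt hq.out.one_lt) (ZMod.orderOf_dvd_card_sub_one hx)
  have := hq.out.one_lt
  omega

theorem ZMod.exists_eq_pow_mul_orderOf_of_isRoot_cyclotomic {m : ℕ} (hm : m ≠ 0) {x : ZMod q}
    (hx : (cyclotomic m (ZMod q)).IsRoot x) : ∃ t, m = q ^ t * orderOf x := by
  obtain ⟨t, m', hqm', rfl⟩ := Nat.exists_eq_pow_mul_and_not_dvd hm q hq.out.ne_one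
  have : NeZero (m' : ZMod q) := ⟨by rwa [Ne, ZMod.natCast_eq_zero_iff]⟩
  exact ⟨t, by rw [(isRoot_cyclotomic_prime_pow_mul_iff_of_charP.mp hx).eq_orderOf]⟩

theorem ZMod.isRoot_pow_of_coprime_orderOf (hP : P.PrimeSelfPowClosed) {x : ZMod q} (hx0 : x ≠ 0)
    (hx : P.IsRoot x) {r : ℕ} (hr : r.Coprime (orderOf x)) : P.IsRoot (x ^ r) := by
  set d := orderOf x
  have hd : 0 < d := ZMod.orderOf_pos_of_ne_zero hx0
  have hqd : q.Coprime d := Nat.coprime_of_lt_prime hd.ne' (ZMod.orderOf_lt_of_ne_zero hx0) hq.out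
  have : NeZero d := ⟨hd.ne'⟩
  have : NeZero (q * d) := ⟨mul_ne_zero hq.out.ne_zero hd.ne'⟩
  -- Dirichlet: a prime `p` with `p ≡ x (mod q)` and `p ≡ r (mod d)`
  have hunit : IsUnit ((ZMod.chineseRemainder hqd).symm (x, r)) :=
    (Prod.isUnit_iff.mpr ⟨hx0.isUnit, (ZMod.isUnit_iff_coprime r d).mpr hr⟩).map _
  obtain ⟨p, -, hp, hpx⟩ := Nat.forall_exists_prime_gt_and_eq_mod hunit 0
  have hpx : ((p : ZMod q), (p : ZMod d)) = (x, (r : ZMod d)) := by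
    rw [← RingEquiv.apply_symm_apply (ZMod.chineseRemainder hqd) (x, _), ← hpx, map_natCast]
    rfl
  obtain ⟨hpq, hpd⟩ := Prod.mk.inj hpx
  have hxp : x ^ p = x ^ r := by
    rw [← pow_mod_orderOf, (ZMod.natCast_eq_natCast_iff _ _ _).mp hpd, pow_mod_orderOf]
  have := hP p hp (hpq ▸ hx0) (hpq ▸ hx)
  rwa [hpq, hxp] at this

theorem ZMod.totient_orderOf_le_natDegree (hP0 : P ≠ 0) (hP : P.PrimeSelfPowClosed) {x : ZMod q}
    (hx0 : x ≠ 0) (hx : P.IsRoot x) : (orderOf x).totient ≤ P.natDegree := by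
  have hd : 0 < orderOf x := ZMod.orderOf_pos_of_ne_zero hx0
  have : NeZero (orderOf x) := ⟨hd.ne'⟩
  have hprim := IsPrimitiveRoot.orderOf x
  rw [← hprim.card_primitiveRoots]
  refine card_le_degree_of_subset_roots fun μ hμ => ?_
  rw [Finset.mem_val, mem_primitiveRoots hd] at hμ
  obtain ⟨i, -, rfl⟩ := hprim.eq_pow_of_pow_eq_one hμ.pow_eq_one
  exact (mem_roots hP0).mpr
    (ZMod.isRoot_pow_of_coprime_orderOf hP hx0 hx ((hprim.pow_iff_coprime hd i).mp hμ))

end ZMod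

theorem exists_prime_orderOf_natCast_eq {e ℓ : ℕ} (he : 2 ≤ e) (hℓ : ℓ.Prime) (hℓe : ℓ ∣ e)
    (hmax : ∀ p ∈ e.primeFactors, p ≤ ℓ) : ∃ q : ℕ, q.Prime ∧ ℓ < q ∧
      (cyclotomic e (ZMod q)).IsRoot (ℓ : ZMod q) ∧ orderOf (ℓ : ZMod q) = e := by
  obtain ⟨q, hq, hqdvd⟩ := Nat.exists_prime_and_dvd (n := ((cyclotomic e ℤ).eval (ℓ : ℤ)).natAbs) (by
    have := sub_one_lt_natAbs_cyclotomic_eval (by omega : 1 < e) hℓ.ne_one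
    have := hℓ.two_le
    omega)
  have : Fact q.Prime := ⟨hq⟩
  have hx : (cyclotomic e (ZMod q)).IsRoot (ℓ : ZMod q) := by
    rw [← map_cyclotomic_int, IsRoot, eval_natCast_map, eq_intCast,
      ZMod.intCast_zmod_eq_zero_iff_dvd]
    exact Int.natCast_dvd.mpr hqdvd
  have hx0 : (ℓ : ZMod q) ≠ 0 := fun h => by
    rw [h, IsRoot, ← coeff_zero_eq_eval_zero, cyclotomic_coeff_zero _ he] at hx
    exact one_ne_zero hx
  obtain ⟨t, ht⟩ := ZMod.exists_eq_pow_mul_orderOf_of_isRoot_cyclotomic (by omega) hx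
  have hℓq : ℓ ≠ q := fun h => hx0 (h ▸ ZMod.natCast_self q)
  have hℓd : ℓ ∣ orderOf (ℓ : ZMod q) :=
    (Nat.Coprime.pow_right t ((Nat.coprime_primes hℓ hq).mpr hℓq)).dvd_of_dvd_mul_left (ht ▸ hℓe)
  have hlt : ℓ < q := (Nat.le_of_dvd (ZMod.orderOf_pos_of_ne_zero hx0) hℓd).trans_lt
    (ZMod.orderOf_lt_of_ne_zero hx0)
  -- every prime factor of `e` is at most `ℓ < q`, so the power of `q` is trivial
  have ht0 : t = 0 := by
    by_contra h
    have hqe : q ∈ e.primeFactors :=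
      Nat.mem_primeFactors.mpr ⟨hq, ht ▸ (dvd_pow_self q h).mul_right _, by omega⟩
    exact (hmax q hqe).not_gt hlt
  exact ⟨q, hq, hlt, hx, by rw [ht, ht0, pow_zero, one_mul]⟩

theorem Multiset.eq_zero_of_primeSelfPowClosed_prod_cyclotomic {S : Multiset ℕ}
    (hS : ∀ e ∈ S, 2 ≤ e) (hroots : ∀ (q : ℕ) [Fact q.Prime],
      ((S.map fun e => cyclotomic e ℤ).prod.map (Int.castRingHom (ZMod q))).PrimeSelfPowClosed) :
    S = 0 := by
  by_contra hS0
  obtain ⟨e, heS, hmin⟩ := S.toFinset.exists_min_image (fun e => toLex e.factorization)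
    (Multiset.toFinset_nonempty.mpr hS0)
  rw [Multiset.mem_toFinset] at heS
  have he := hS e heS
  have hne : e.primeFactors.Nonempty := Nat.nonempty_primeFactors.mpr (by omega)
  have hℓ := Finset.max'_mem _ hne
  set ℓ := e.primeFactors.max' hne
  have hℓp := Nat.prime_of_mem_primeFactors hℓ
  have hℓe := Nat.dvd_of_mem_primeFactors hℓ
  obtain ⟨q, hq, hℓq, hx, hord⟩ :=
    exists_prime_orderOf_natCast_eq he hℓp hℓe fun p hp => Finset.le_max' _ p hp
  have : Fact q.Prime := ⟨hq⟩
  have hx0 : (ℓ : ZMod q) ≠ 0 := fun h => by simp [h] at hord; omega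
  obtain ⟨e', he'S, hx'⟩ := (isRoot_map_prod_cyclotomic_iff _).mp
    (hroots q ℓ hℓp hx0 ((isRoot_map_prod_cyclotomic_iff _).mpr ⟨e, heS, hx⟩))
  obtain ⟨t, ht⟩ :=
    ZMod.exists_eq_pow_mul_orderOf_of_isRoot_cyclotomic (by have := hS e' he'S; omega) hx'
  rw [orderOf_pow_of_dvd hℓp.ne_zero (hord ▸ hℓe), hord] at ht
  exact (hmin e' (Multiset.mem_toFinset.mpr he'S)).not_gt
    (ht ▸ Nat.toLex_factorization_lt (by omega) hℓp hℓe hq hℓq t)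

theorem Polynomial.exists_cyclotomic_dvd_of_dvd {g g₁ : ℤ[X]} (hg : g.Monic)
    (hroots : ∀ (q : ℕ) [Fact q.Prime], (g.map (Int.castRingHom (ZMod q))).PrimeSelfPowClosed)
    (hg₁ : g₁ ∣ g) (hdeg : 0 < g₁.natDegree) (h0 : g₁.eval 0 ≠ 0) :
    ∃ e ∈ (2 * g.natDegree).factorial.divisors, cyclotomic e ℤ ∣ g₁ := by
  by_contra! hnd
  set L := (2 * g.natDegree).factorial
  obtain ⟨N, a, b, hN, hab⟩ := exists_mul_add_mul_eq_C_of_isCoprime_map (g := X ^ L - 1)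
    (by rw [← C_1, natDegree_X_pow_sub_C]; exact Nat.factorial_ne_zero _)
    (by simpa using isCoprime_map_X_pow_sub_one (Nat.factorial_ne_zero _) hnd)
  obtain ⟨q, n, hq, hNq, hqg₁, hqn⟩ := exists_prime_gt_dvd_eval hdeg h0 N.natAbs
  have : Fact q.Prime := ⟨hq⟩
  have hx0 : (n : ZMod q) ≠ 0 := by rwa [Ne, ZMod.intCast_zmod_eq_zero_iff_dvd]
  have hx : (g.map (Int.castRingHom (ZMod q))).IsRoot n := by
    refine IsRoot.dvd ?_ (Polynomial.map_dvd _ hg₁)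
    rwa [IsRoot, eval_intCast_map, eq_intCast, ZMod.intCast_zmod_eq_zero_iff_dvd]
  have hL : orderOf (n : ZMod q) ∣ L := Nat.dvd_factorial_of_totient_le
    (ZMod.orderOf_pos_of_ne_zero hx0).ne'
    ((ZMod.totient_orderOf_le_natDegree (hg.map _).ne_zero (hroots q) hx0 hx).trans natDegree_map_le)
  have hqL : (q : ℤ) ∣ n ^ L - 1 := by
    rw [← ZMod.intCast_zmod_eq_zero_iff_dvd]
    push_cast
    rw [orderOf_dvd_iff_pow_eq_one.mp hL, sub_self]
  have hqN : (q : ℤ) ∣ N := by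
    have := congrArg (eval n) hab
    simp only [eval_add, eval_mul, eval_sub, eval_pow, eval_X, eval_one, eval_C] at this
    exact this ▸ dvd_add (hqg₁.mul_right _) (hqL.mul_right _)
  exact hNq.not_ge (Nat.le_of_dvd (Int.natAbs_pos.mpr hN) (Int.natCast_dvd.mp hqN))

theorem Polynomial.natDegree_eq_zero_of_primeSelfPowClosed {g : ℤ[X]} (hg : g.Monic)
    (h0 : g.eval 0 ≠ 0) (h1 : g.eval 1 ≠ 0)
    (hroots : ∀ (q : ℕ) [Fact q.Prime], (g.map (Int.castRingHom (ZMod q))).PrimeSelfPowClosed) :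
    g.natDegree = 0 := by
  obtain ⟨S, g₁, hg₁, hS, hgS, hnd⟩ :=
    exists_prod_cyclotomic_mul (s := (2 * g.natDegree).factorial.divisors) (by simp) hg
  rcases eq_or_ne g₁ 1 with rfl | hg₁1
  · rw [mul_one] at hgS
    have hcyc : ∀ e ∈ S, cyclotomic e ℤ ∣ g := fun e he =>
      hgS ▸ Multiset.dvd_prod (Multiset.mem_map_of_mem _ he)
    have hS2 : ∀ e ∈ S, 2 ≤ e := fun e he => by
      have := Nat.pos_of_mem_divisors (hS e he)
      rcases (show e = 1 ∨ 2 ≤ e by omega) with rfl | h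
      · exact absurd (eval_eq_zero_of_dvd_of_eval_eq_zero (hcyc 1 he) (by simp)) h1
      · exact h
    rw [hgS, Multiset.eq_zero_of_primeSelfPowClosed_prod_cyclotomic hS2 (hgS ▸ hroots)]
    simp
  · have hdeg : 0 < g₁.natDegree :=
      Nat.pos_of_ne_zero fun h => hg₁1 (hg₁.natDegree_eq_zero.mp h)
    have hg₁0 : g₁.eval 0 ≠ 0 := fun h =>
      h0 (eval_eq_zero_of_dvd_of_eval_eq_zero (Dvd.intro_left _ hgS.symm) h)
    obtain ⟨e, he, hdvd⟩ :=
      exists_cyclotomic_dvd_of_dvd hg hroots (Dvd.intro_left _ hgS.symm) hdeg hg₁0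
    exact absurd hdvd (hnd e he)

/-- If `f ∈ ℤ[x]` is monic and satisfies `f(p) ∣ f(p^p)` for every prime `p`,
and `f` is not a power of `x`, then `x - 1` divides `f` in `ℤ[x]`. -/
theorem stmt_2 (f : Polynomial ℤ) (hf : f.Monic)
    (hdvd : ∀ p : ℕ, p.Prime → f.eval (p : ℤ) ∣ f.eval ((p : ℤ) ^ p))
    (hpow : ∀ m : ℕ, f ≠ X ^ m) :
    (X - 1 : Polynomial ℤ) ∣ f := by
  rw [← C_1, dvd_iff_isRoot]
  by_contra hf1
  obtain ⟨g, hfg, hgX⟩ := f.exists_eq_pow_rootMultiplicity_mul_and_not_dvd hf.ne_zero 0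
  rw [map_zero, sub_zero] at hfg hgX
  generalize rootMultiplicity 0 f = k at hfg
  have hg : g.Monic := (monic_X_pow _).of_mul_monic_left (hfg ▸ hf)
  have hg0 : g.eval 0 ≠ 0 := by
    rw [← coeff_zero_eq_eval_zero]
    exact fun h => hgX (X_dvd_iff.mpr h)
  have hg1 : g.eval 1 ≠ 0 := fun h => hf1 (by rw [IsRoot, hfg, eval_mul, h, mul_zero])
  have hdeg := natDegree_eq_zero_of_primeSelfPowClosed hg hg0 hg1
    fun q _ => primeSelfPowClosed_map hfg hdvd _
  exact hpow _ (by rw [hfg, hg.natDegree_eq_zero.mp hdeg, mul_one])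
end

section
/- Let g ∈ ℤ[x] be a monic squarefree polynomial with g(0) ≠ 0 and deg(g) ≥ 1, and suppose there is a positive integer N₀ such that for every prime p ≥ N₀ and every prime q, q ∣ g(p) implies q ∣ g(p^p). Then there exists a constant C, depending only on g, such that there are infinitely many primes q with the following two properties: the reduction of g modulo q splits completely into distinct linear factors in 𝔽_q[x], and every root r of g modulo q has multiplicative order at most C in (ℤ/qℤ)^×. -/
/-!
Let `q` be a large prime and `x` a root of `g` modulo `q`, of multiplicative order `m`. By
Dirichlet's theorem there are primes `p ≥ N₀` with `p ≡ x (mod q)` in every unit class modulo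
`m`, and `p ^ p ≡ x ^ p` then runs through all `x ^ a` with `a` coprime to `m`; so these `φ(m)`
distinct powers are roots of `g`, and `φ(m) ≤ deg g` forces `m ∣ L := (2 deg g)!`. Hence modulo
every large prime each root of `g` is a root of `X ^ L - 1`. As `g` is squarefree, the part of `g`
coprime to `X ^ L - 1` would have, by Schur's theorem, a large prime divisor of one of its values
not dividing the resultant, so it is trivial and `g ∣ X ^ L - 1` in `ℤ[X]`. For the infinitely
many primes `q ≡ 1 (mod L)`, `X ^ L - 1` divides `X ^ q - X`, so `g` splits into distinct linear
factors modulo `q` and all its roots have order dividing `L`.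
-/

open Polynomial Nat Filter

section IsIntegrallyClosed

variable {R K : Type*} [CommRing R] [IsIntegrallyClosed R] [Field K] [Algebra R K]
  [IsFractionRing R K]

theorem Polynomial.Monic.exists_monic_map_eq_of_dvd_map {g : R[X]} (hg : g.Monic) {H : K[X]}
    (hH : H.Monic) (hHg : H ∣ g.map (algebraMap R K)) :
    ∃ h : R[X], h.Monic ∧ h.map (algebraMap R K) = H ∧ h ∣ g := by
  obtain ⟨h, rfl⟩ : ∃ h : R[X], h.map (algebraMap R K) = H := by
    simpa [hH.leadingCoeff] using IsIntegrallyClosed.eq_map_mul_C_of_dvd K hg hHg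
  have hh : h.Monic := monic_of_injective (IsFractionRing.injective R K) hH
  exact ⟨h, hh, rfl, (map_dvd_map _ (IsFractionRing.injective R K) hh).1 hHg⟩

theorem Polynomial.Monic.squarefree_map {g : R[X]} (hg : g.Monic) (hsf : Squarefree g) :
    Squarefree (g.map (algebraMap R K)) := by
  classical
  intro A hA
  have hA0 : A ≠ 0 := by
    rintro rfl
    exact (hg.map _).ne_zero (zero_dvd_iff.1 (by simpa using hA))
  have hAn : normalize A * normalize A ∣ g.map (algebraMap R K) :=
    (mul_dvd_mul (normalize_dvd_iff.2 dvd_rfl) (normalize_dvd_iff.2 dvd_rfl)).trans hA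
  obtain ⟨a, ha, hamap, -⟩ :=
    hg.exists_monic_map_eq_of_dvd_map (monic_normalize hA0) ((dvd_mul_right _ _).trans hAn)
  have haa : a * a ∣ g := by
    rwa [← map_dvd_map _ (IsFractionRing.injective R K) (ha.mul ha), Polynomial.map_mul, hamap]
  have := (hsf a haa).map (mapRingHom (algebraMap R K))
  rw [coe_mapRingHom, hamap] at this
  exact (normalize_associated A).isUnit this

end IsIntegrallyClosed

theorem Polynomial.exists_prime_gt_dvd_eval_s11 {h : ℤ[X]} (hh : 0 < h.natDegree) (M : ℕ) :
    ∃ q : ℕ, q.Prime ∧ M < q ∧ ∃ n : ℤ, (q : ℤ) ∣ h.eval n := by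
  set c := h.eval 0
  rcases eq_or_ne c 0 with hc | hc
  · obtain ⟨q, hMq, hq⟩ := Nat.exists_infinite_primes (M + 1)
    refine ⟨q, hq, hMq, q, ?_⟩
    simpa [c, hc] using sub_dvd_eval_sub (q : ℤ) 0 h
  obtain ⟨t, hMt, hct⟩ : ∃ t : ℤ, (M ! : ℤ) ∣ t ∧ ‖c‖ < ‖h.eval (c * t)‖ := by
    have hz : Tendsto (fun s : ℕ => ‖c * (M ! * s : ℤ)‖) atTop atTop := by
      simp only [norm_mul, Int.norm_natCast]
      exact (tendsto_natCast_atTop_atTop.const_mul_atTop (by positivity)).const_mul_atTop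
        (by positivity)
    have hlim := h.tendsto_norm_atTop (natDegree_pos_iff_degree_pos.1 hh) hz
    obtain ⟨s, hs⟩ := (hlim.eventually_gt_atTop ‖c‖).exists
    exact ⟨M ! * s, dvd_mul_right _ _, hs⟩
  -- `h (c t) = c w` with `w ≡ 1` modulo every prime `≤ M`, since `M ! ∣ t`.
  obtain ⟨e, he⟩ := sub_dvd_eval_sub (c * t) 0 h
  set w := 1 + t * e
  have hw : h.eval (c * t) = c * w := by linear_combination he
  have hw1 : w.natAbs ≠ 1 := by
    intro h1
    rw [hw, norm_mul] at hct
    rcases Int.natAbs_eq_iff.1 h1 with h1 | h1 <;> simp [h1] at hct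
  obtain ⟨q, hq, hqw⟩ := Nat.exists_prime_and_dvd hw1
  have hqw' : (q : ℤ) ∣ w := Int.natCast_dvd.2 hqw
  refine ⟨q, hq, ?_, c * t, hw ▸ dvd_mul_of_dvd_right hqw' c⟩
  by_contra! hqM
  have hqt : (q : ℤ) ∣ t := (Int.natCast_dvd_natCast.2 (Nat.dvd_factorial hq.pos hqM)).trans hMt
  have hq1 : (q : ℤ) ∣ 1 := by simpa [w] using dvd_sub hqw' (hqt.mul_right e)
  exact hq.one_lt.ne' (by exact_mod_cast Int.eq_one_of_dvd_one (by positivity) hq1)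

theorem Polynomial.exists_prime_gt_dvd_eval_not_dvd_eval {h f : ℤ[X]} (hh : 0 < h.natDegree)
    (hhf : IsCoprime (h.map (algebraMap ℤ ℚ)) (f.map (algebraMap ℤ ℚ))) (M : ℕ) :
    ∃ q : ℕ, q.Prime ∧ M < q ∧
      ∃ n : ℤ, (q : ℤ) ∣ h.eval n ∧ ¬ (q : ℤ) ∣ f.eval n := by
  have hres : resultant h f ≠ 0 := by
    have := resultant_ne_zero _ _ hhf
    rwa [natDegree_map_eq_of_injective (IsFractionRing.injective ℤ ℚ),
      natDegree_map_eq_of_injective (IsFractionRing.injective ℤ ℚ), resultant_map_map,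
      map_ne_zero_iff _ (IsFractionRing.injective ℤ ℚ)] at this
  obtain ⟨u, v, -, -, huv⟩ := exists_mul_add_mul_eq_C_resultant h f le_rfl le_rfl (.inl hh.ne')
  obtain ⟨q, hq, hMq, n, hqn⟩ := exists_prime_gt_dvd_eval_s11 hh (max M (resultant h f).natAbs)
  refine ⟨q, hq, (le_max_left _ _).trans_lt hMq, n, hqn, fun hqf ↦ ?_⟩
  have hq_res : (q : ℤ) ∣ resultant h f := by
    have := congrArg (eval n) huv
    rw [eval_add, eval_mul, eval_mul, eval_C] at this
    exact this ▸ dvd_add (hqn.mul_right _) (hqf.mul_right _)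
  exact (Nat.le_of_dvd (Int.natAbs_pos.2 hres) (Int.natCast_dvd.1 hq_res)).not_gt
    ((le_max_right _ _).trans_lt hMq)

theorem Polynomial.isRoot_map_intCast_iff {g : ℤ[X]} {q : ℕ} {n : ℤ} :
    (g.map (Int.castRingHom (ZMod q))).IsRoot n ↔ (q : ℤ) ∣ g.eval n := by
  rw [IsRoot.def, eval_intCast_map, eq_intCast, ZMod.intCast_zmod_eq_zero_iff_dvd, Int.cast_id]

theorem Polynomial.Monic.dvd_of_forall_isRoot_map {g f : ℤ[X]} (hg : g.Monic) (hsf : Squarefree g)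
    (N : ℕ) (hroots : ∀ q : ℕ, q.Prime → N < q → ∀ x : ZMod q,
      (g.map (Int.castRingHom (ZMod q))).IsRoot x → (f.map (Int.castRingHom (ZMod q))).IsRoot x) :
    g ∣ f := by
  classical
  set G := g.map (algebraMap ℤ ℚ)
  set F := f.map (algebraMap ℤ ℚ)
  obtain ⟨G₁, hG⟩ := gcd_dvd_left G F
  have hD : (gcd G F).Monic := by
    rw [← normalize_gcd]
    exact monic_normalize (gcd_ne_zero_of_left (hg.map _).ne_zero)
  have hG₁ : G₁.Monic := hD.of_mul_monic_left (hG ▸ hg.map _)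
  have hG₁F : IsCoprime G₁ F := by
    refine IsRelPrime.isCoprime fun e heG₁ heF ↦ ?_
    have hsfG : Squarefree (gcd G F * G₁) := hG ▸ hg.squarefree_map hsf
    refine IsRelPrime.of_squarefree_mul hsfG ?_ heG₁
    exact dvd_gcd (heG₁.trans (hG ▸ dvd_mul_left G₁ _)) heF
  obtain hdeg | hdeg := Nat.eq_zero_or_pos G₁.natDegree
  · rw [eq_one_of_monic_natDegree_zero hG₁ hdeg, mul_one] at hG
    exact (map_dvd_map _ (IsFractionRing.injective ℤ ℚ) hg).1
      (hG ▸ gcd_dvd_right G F : G ∣ F)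
  obtain ⟨g₁, -, rfl, hg₁g⟩ :=
    hg.exists_monic_map_eq_of_dvd_map hG₁ (Dvd.intro_left _ hG.symm)
  rw [natDegree_map_eq_of_injective (IsFractionRing.injective ℤ ℚ)] at hdeg
  obtain ⟨q, hq, hNq, n, hqg₁, hqf⟩ := exists_prime_gt_dvd_eval_not_dvd_eval hdeg hG₁F N
  have hroot := hroots q hq hNq n (isRoot_map_intCast_iff.2 (hqg₁.trans (eval_dvd hg₁g)))
  exact (hqf (isRoot_map_intCast_iff.1 hroot)).elim

theorem ZMod.orderOf_pos {q : ℕ} [Fact q.Prime] {x : ZMod q} (hx : x ≠ 0) : 0 < orderOf x :=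
  Nat.pos_of_dvd_of_pos (ZMod.orderOf_dvd_card_sub_one hx)
    (Nat.sub_pos_of_lt (Fact.out : q.Prime).one_lt)

theorem ZMod.pow_mem_of_coprime_orderOf {q N₀ : ℕ} [Fact q.Prime] {S : Set (ZMod q)}
    (hS : ∀ p : ℕ, p.Prime → N₀ ≤ p → (p : ZMod q) ∈ S → (p : ZMod q) ^ p ∈ S)
    {x : ZMod q} (hxS : x ∈ S) (hx0 : x ≠ 0) {a : ℕ} (ha : a.Coprime (orderOf x)) :
    x ^ a ∈ S := by
  let m := orderOf x
  have hqm : q.Coprime m := Nat.Coprime.coprime_dvd_right (ZMod.orderOf_dvd_card_sub_one hx0)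
    ((Nat.coprime_self_sub_right (Fact.out : q.Prime).one_le).2 (Nat.coprime_one_right q))
  have : NeZero (q * m) := ⟨(Nat.mul_pos (Fact.out : q.Prime).pos (ZMod.orderOf_pos hx0)).ne'⟩
  have hu : IsUnit ((ZMod.chineseRemainder hqm).symm (x, (a : ZMod m))) :=
    (Prod.isUnit_iff.2 ⟨hx0.isUnit, (ZMod.isUnit_iff_coprime a m).2 ha⟩).map _
  -- Dirichlet: a prime `p ≥ N₀` with `p ≡ x (mod q)` and `p ≡ a (mod orderOf x)`,
  -- so that `p ^ p = x ^ a` in `ZMod q`.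
  obtain ⟨p, hpN, hp, hpu⟩ := Nat.forall_exists_prime_gt_and_eq_mod hu N₀
  have hpxa := congrArg (ZMod.chineseRemainder hqm) hpu
  rw [map_natCast, RingEquiv.apply_symm_apply] at hpxa
  obtain ⟨hpx, hpa⟩ := Prod.ext_iff.1 hpxa
  rw [Prod.fst_natCast] at hpx
  rw [Prod.snd_natCast] at hpa
  have hxp : x ^ p = x ^ a := by
    rw [← pow_mod_orderOf, (ZMod.natCast_eq_natCast_iff _ _ _).1 hpa, pow_mod_orderOf]
  have := hS p hp hpN.le (hpx ▸ hxS)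
  rwa [hpx, hxp] at this

theorem totient_orderOf_le_card {M : Type*} [Monoid M] {x : M} {S : Finset M}
    (hS : ∀ a : ℕ, a.Coprime (orderOf x) → x ^ a ∈ S) : φ (orderOf x) ≤ S.card := by
  rw [Nat.totient_eq_card_coprime]
  refine Finset.card_le_card_of_injOn (x ^ ·) (fun a ha ↦ ?_) (pow_injOn_Iio_orderOf.mono ?_)
  · exact hS a (Finset.mem_filter.1 ha).2.symm
  · intro a ha
    exact Finset.mem_range.1 (Finset.mem_filter.1 ha).1

theorem Nat.dvd_factorial_two_mul_totient {m : ℕ} (hm : 0 < m) : m ∣ (2 * φ m)! := by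
  rw [Nat.dvd_iff_prime_pow_dvd_dvd]
  rintro p (_ | k) hp hpk
  · simp
  have hφ : p ^ k * (p - 1) ≤ φ m := by
    rw [← Nat.totient_prime_pow_succ hp]
    exact Nat.le_of_dvd (Nat.totient_pos.2 hm) (Nat.totient_dvd_of_dvd hpk)
  refine Nat.dvd_factorial (pow_pos hp.pos _) ?_
  calc p ^ (k + 1) = p ^ k * p := pow_succ p k
    _ ≤ p ^ k * (2 * (p - 1)) := Nat.mul_le_mul_left _ (by have := hp.two_le; omega)
    _ ≤ 2 * φ m := by linarith

theorem ZMod.pow_factorial_eq_one_of_isRoot {q N₀ : ℕ} [Fact q.Prime] {G : (ZMod q)[X]}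
    (hG : G ≠ 0)
    (hpow : ∀ p : ℕ, p.Prime → N₀ ≤ p → G.IsRoot p → G.IsRoot ((p : ZMod q) ^ p))
    {x : ZMod q} (hx : G.IsRoot x) (hx0 : x ≠ 0) : x ^ (2 * G.natDegree)! = 1 := by
  classical
  have hφ : φ (orderOf x) ≤ G.natDegree := by
    refine (totient_orderOf_le_card (S := G.roots.toFinset) fun a ha ↦ ?_).trans
      ((Multiset.toFinset_card_le _).trans (card_roots' G))
    simpa [hG] using ZMod.pow_mem_of_coprime_orderOf (S := {y | G.IsRoot y}) hpow hx hx0 ha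
  refine orderOf_dvd_iff_pow_eq_one.1 ((Nat.dvd_factorial_two_mul_totient ?_).trans ?_)
  · exact ZMod.orderOf_pos hx0
  · exact Nat.factorial_dvd_factorial (by omega)

theorem Polynomial.Monic.dvd_X_pow_factorial_sub_one {g : ℤ[X]} (hg : g.Monic)
    (hsf : Squarefree g) (hg0 : g.eval 0 ≠ 0) {N₀ : ℕ}
    (hdvd : ∀ p : ℕ, p.Prime → N₀ ≤ p → ∀ q : ℕ, q.Prime →
      (q : ℤ) ∣ g.eval (p : ℤ) → (q : ℤ) ∣ g.eval ((p : ℤ) ^ p)) :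
    g ∣ X ^ (2 * g.natDegree)! - 1 := by
  refine hg.dvd_of_forall_isRoot_map hsf (g.eval 0).natAbs fun q hq hgq x hx ↦ ?_
  have : Fact q.Prime := ⟨hq⟩
  have hx0 : x ≠ 0 := by
    rintro rfl
    have hq0 := isRoot_map_intCast_iff.1 (by simpa using hx)
    exact hgq.not_ge (Nat.le_of_dvd (Int.natAbs_pos.2 hg0) (Int.natCast_dvd.1 hq0))
  have hpow : ∀ p : ℕ, p.Prime → N₀ ≤ p →
      (g.map (Int.castRingHom (ZMod q))).IsRoot p →
      (g.map (Int.castRingHom (ZMod q))).IsRoot ((p : ZMod q) ^ p) := fun p hp hNp hpq ↦ by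
    simpa using isRoot_map_intCast_iff.2
      (hdvd p hp hNp q hq (isRoot_map_intCast_iff.1 (by simpa using hpq)))
  have hxL := ZMod.pow_factorial_eq_one_of_isRoot (hg.map _).ne_zero hpow hx hx0
  rw [hg.natDegree_map] at hxL
  simp [hxL]

theorem Polynomial.Monic.exists_injective_eq_prod_X_sub_C {K : Type*} [Field K] {f : K[X]}
    (hf : f.Monic) (hs : f.Splits) (hsep : f.Separable) :
    ∃ r : Fin f.natDegree → K, Function.Injective r ∧ f = ∏ i, (X - C (r i)) := by
  classical
  have hcard : f.roots.toFinset.card = f.natDegree := by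
    rw [Multiset.toFinset_card_of_nodup (nodup_roots hsep), ← splits_iff_card_roots.1 hs]
  let e := f.roots.toFinset.equivFin.trans (finCongr hcard)
  refine ⟨fun i ↦ e.symm i, Subtype.val_injective.comp e.symm.injective, ?_⟩
  conv_lhs => rw [hs.eq_prod_roots_of_monic hf]
  rw [e.symm.prod_comp (fun s ↦ X - C s.1), Finset.prod_coe_sort f.roots.toFinset (X - C ·),
    Finset.prod_eq_multiset_prod, Multiset.toFinset_val, (nodup_roots hsep).dedup]

theorem X_pow_sub_one_dvd_X_pow_sub_X {R : Type*} [CommRing R] {L q : ℕ} (hq : 0 < q)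
    (hL : L ∣ q - 1) : (X ^ L - 1 : R[X]) ∣ X ^ q - X := by
  obtain ⟨k, hk⟩ := hL
  have : (X ^ q - X : R[X]) = (X ^ (L * k) - 1) * X := by
    rw [sub_mul, one_mul, ← pow_succ, ← hk, Nat.sub_add_cancel hq]
  have hdvd : (X ^ L - 1 : R[X]) ∣ X ^ (L * k) - 1 := by
    simpa [one_pow, ← pow_mul] using sub_dvd_pow_sub_pow (X ^ L : R[X]) 1 k
  rw [this]
  exact hdvd.mul_right X

theorem ZMod.exists_injective_eq_prod_X_sub_C_of_dvd {q : ℕ} [Fact q.Prime] {f : (ZMod q)[X]}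
    (hf : f.Monic) (hdvd : f ∣ X ^ q - X) :
    ∃ r : Fin f.natDegree → ZMod q, Function.Injective r ∧ f = ∏ i, (X - C (r i)) :=
  hf.exists_injective_eq_prod_X_sub_C
    ((GaloisField.splits_zmod_X_pow_sub_X q).of_dvd
      (FiniteField.X_pow_card_sub_X_ne_zero _ (Fact.out : q.Prime).one_lt) hdvd)
    ((galois_poly_separable q q dvd_rfl).of_dvd hdvd)

theorem stmt_11_general (g : Polynomial ℤ) (hg : g.Monic) (hsf : Squarefree g)
    (hg0 : g.eval 0 ≠ 0) (N₀ : ℕ)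
    (hdvd : ∀ p : ℕ, p.Prime → N₀ ≤ p → ∀ q : ℕ, q.Prime →
      (q : ℤ) ∣ g.eval (p : ℤ) → (q : ℤ) ∣ g.eval ((p : ℤ) ^ p)) :
    ∃ C₀ : ℕ, {q : ℕ | q.Prime ∧
      (∃ r : Fin g.natDegree → ZMod q, Function.Injective r ∧
        g.map (Int.castRingHom (ZMod q)) = ∏ i, (X - C (r i))) ∧
      (∀ r : ℤ, (q : ℤ) ∣ g.eval r →
        ∃ k : ℕ, 0 < k ∧ k ≤ C₀ ∧ (q : ℤ) ∣ r ^ k - 1)}.Infinite := by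
  set L := (2 * g.natDegree)!
  have hgL : g ∣ X ^ L - 1 := hg.dvd_X_pow_factorial_sub_one hsf hg0 hdvd
  refine ⟨L, Set.infinite_of_forall_exists_gt fun a ↦ ?_⟩
  obtain ⟨q, hq, haq, hq1⟩ := Nat.exists_prime_gt_modEq_one a (Nat.factorial_ne_zero _)
  have : Fact q.Prime := ⟨hq⟩
  have hgq : g.map (Int.castRingHom (ZMod q)) ∣ X ^ q - X := by
    refine (Polynomial.map_dvd (Int.castRingHom (ZMod q)) hgL).trans ?_
    rw [Polynomial.map_sub, Polynomial.map_pow, map_X, Polynomial.map_one]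
    exact X_pow_sub_one_dvd_X_pow_sub_X hq.pos ((Nat.modEq_iff_dvd' hq.one_le).1 hq1.symm)
  have hsplit := ZMod.exists_injective_eq_prod_X_sub_C_of_dvd (hg.map _) hgq
  rw [hg.natDegree_map] at hsplit
  refine ⟨q, ⟨hq, hsplit, fun r hr ↦ ⟨L, Nat.factorial_pos _, le_rfl, ?_⟩⟩, haq⟩
  simpa using hr.trans (eval_dvd (x := r) hgL)

/-- **Lemma 5.1.** Let `g ∈ ℤ[x]` be monic and squarefree with `g(0) ≠ 0` and
`deg g ≥ 1`, and suppose there is a positive integer `N₀` such that for every prime `p ≥ N₀`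
and every prime `q`, `q ∣ g(p)` implies `q ∣ g(p^p)`. Then there is a constant `C`, depending
only on `g`, such that for infinitely many primes `q` the reduction of `g` mod `q` splits
completely into distinct linear factors and every root `r` of `g` mod `q` has multiplicative
order at most `C` modulo `q` (expressed as: some positive `k ≤ C` satisfies `r^k ≡ 1 mod q`). -/
theorem stmt_11 (g : Polynomial ℤ) (hg : g.Monic) (hsf : Squarefree g)
    (hg0 : g.eval 0 ≠ 0) (hdeg : 1 ≤ g.natDegree) (N₀ : ℕ) (hN₀ : 0 < N₀)
    (hdvd : ∀ p : ℕ, p.Prime → N₀ ≤ p → ∀ q : ℕ, q.Prime →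
      (q : ℤ) ∣ g.eval (p : ℤ) → (q : ℤ) ∣ g.eval ((p : ℤ) ^ p)) :
    ∃ C₀ : ℕ, {q : ℕ | q.Prime ∧
      (∃ r : Fin g.natDegree → ZMod q, Function.Injective r ∧
        g.map (Int.castRingHom (ZMod q)) = ∏ i, (X - C (r i))) ∧
      (∀ r : ℤ, (q : ℤ) ∣ g.eval r →
        ∃ k : ℕ, 0 < k ∧ k ≤ C₀ ∧ (q : ℤ) ∣ r ^ k - 1)}.Infinite :=
  stmt_11_general g hg hsf hg0 N₀ hdvd
end
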